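/- arXiv:1101.0339 — 4 statements merged into one kernel-verified Lean document; each statement's English description precedes it below -/
import Mathlib

section
/- Let M, N be positive integers with N ≥ M, set a_i = 2i − 1 + N − M for i = 1,…,M, let ζ_1 ≥ ζ_2 ≥ ⋯ ≥ ζ_M > 0 be real numbers with ∑_{i=1}^M ζ_i = M, and let r ∈ [0, M]. Define ν*_i = min{ (1/ζ_i) · (∑_{j=i}^M ζ_j − r)^+ , 1 } for i = 1,…,M, where (x)^+ = max{x,0}. Then ν* ∈ [0,1]^M, ν* is feasible (i.e., ∑_{i=1}^M ζ_i ν*_i ≥ M − r), and ν* is optimal: for every ν ∈ [0,1]^M with ∑_{i=1}^M ζ_i ν_i ≥ M − r one has ∑_{i=1}^M a_i ν_i ≥ ∑_{i=1}^M a_i ν*_i. -/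
theorem dmt_optimal_solution (M N : ℕ) (hM : 0 < M) (hNM : M ≤ N)
    (a : Fin M → ℝ) (ha : ∀ i, a i = 2*((i : ℕ) : ℝ) + 1 + (N : ℝ) - (M : ℝ))
    (ζ : Fin M → ℝ) (hζpos : ∀ i, 0 < ζ i) (hζanti : Antitone ζ)
    (hζsum : ∑ i, ζ i = (M : ℝ))
    (r : ℝ) (hr : r ∈ Set.Icc (0 : ℝ) (M : ℝ))
    (ν : Fin M → ℝ)
    (hν : ∀ i, ν i = min ((1 / ζ i) * max ((∑ j ∈ Finset.Ici i, ζ j) - r) 0) 1) :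
    (∀ i, ν i ∈ Set.Icc (0 : ℝ) 1) ∧
    ((M : ℝ) - r ≤ ∑ i, ζ i * ν i) ∧
    (∀ μ : Fin M → ℝ, (∀ i, μ i ∈ Set.Icc (0 : ℝ) 1) →
      (M : ℝ) - r ≤ ∑ i, ζ i * μ i → ∑ i, a i * ν i ≤ ∑ i, a i * μ i) := by
  obtain ⟨hr0, hrM⟩ := hr
  have hMN : (M : ℝ) ≤ (N : ℝ) := Nat.cast_le.mpr hNM
  -- a is positive and monotone
  have hapos : ∀ i, 0 < a i := by
    intro i
    rw [ha i]
    have : (0:ℝ) ≤ ((i:ℕ):ℝ) := Nat.cast_nonneg _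
    linarith
  have hamono : ∀ i j : Fin M, i ≤ j → a i ≤ a j := by
    intro i j hij
    rw [ha i, ha j]
    have : ((i:ℕ):ℝ) ≤ ((j:ℕ):ℝ) := Nat.cast_le.mpr hij
    linarith
  -- ν ∈ [0,1]
  have hν01 : ∀ i, ν i ∈ Set.Icc (0:ℝ) 1 := by
    intro i
    rw [hν i]
    constructor
    · apply le_min _ zero_le_one
      apply mul_nonneg
      · exact one_div_nonneg.mpr (hζpos i).le
      · exact le_max_right _ _
    · exact min_le_right _ _
  -- key identity
  have haux : ∀ x c : ℝ, 0 ≤ c → min (max x 0) c = max x 0 - max (x - c) 0 := by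
    intro x c hc
    rcases le_total x 0 with h | h
    · rw [max_eq_right h, max_eq_right (by linarith), min_eq_left hc]; ring
    · rw [max_eq_left h]
      rcases le_total x c with h2 | h2
      · rw [min_eq_left h2, max_eq_right (by linarith)]; ring
      · rw [min_eq_right h2, max_eq_left (by linarith)]; ring
  have hkey : ∀ i, ζ i * ν i = max ((∑ j ∈ Finset.Ici i, ζ j) - r) 0
      - max ((∑ j ∈ Finset.Ici i, ζ j) - ζ i - r) 0 := by
    intro i
    have hz := hζpos i
    rw [hν i]
    have h1 : ζ i * min ((1 / ζ i) * max ((∑ j ∈ Finset.Ici i, ζ j) - r) 0) 1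
        = min (ζ i * ((1 / ζ i) * max ((∑ j ∈ Finset.Ici i, ζ j) - r) 0)) (ζ i * 1) := by
      rcases le_total ((1 / ζ i) * max ((∑ j ∈ Finset.Ici i, ζ j) - r) 0) 1 with h | h
      · rw [min_eq_left h, min_eq_left (by nlinarith)]
      · rw [min_eq_right h, min_eq_right (by nlinarith)]
    rw [h1]
    have h2 : ζ i * ((1 / ζ i) * max ((∑ j ∈ Finset.Ici i, ζ j) - r) 0)
        = max ((∑ j ∈ Finset.Ici i, ζ j) - r) 0 := by
      field_simp
    rw [h2, mul_one, haux _ _ hz.le]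
    ring_nf
  -- rewrite the tail sums via indicator sums over univ
  have hTval : ∀ i : Fin M, (∑ j ∈ Finset.Ici i, ζ j)
      = ∑ j : Fin M, if (i:ℕ) ≤ (j:ℕ) then ζ j else 0 := by
    intro i
    rw [← Finset.sum_filter]
    congr 1
    ext j
    simp only [Finset.mem_Ici, Finset.mem_filter, Finset.mem_univ, true_and, Fin.le_def]
  have hT'val : ∀ i : Fin M, (∑ j ∈ Finset.Ici i, ζ j) - ζ i
      = ∑ j : Fin M, if (i:ℕ)+1 ≤ (j:ℕ) then ζ j else 0 := by
    intro i
    have hpt : ∀ j : Fin M, (if (i:ℕ) ≤ (j:ℕ) then ζ j else 0)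
        = (if j = i then ζ j else 0) + (if (i:ℕ)+1 ≤ (j:ℕ) then ζ j else 0) := by
      intro j
      rcases eq_or_ne j i with h | h
      · subst h; simp
      · have hne : (j:ℕ) ≠ (i:ℕ) := fun hc => h (Fin.ext hc)
        by_cases h2 : (i:ℕ) ≤ (j:ℕ)
        · have h3 : (i:ℕ)+1 ≤ (j:ℕ) := by omega
          simp [h, h2, h3]
        · have h3 : ¬((i:ℕ)+1 ≤ (j:ℕ)) := by omega
          simp [h, h2, h3]
    have h4 := hTval i
    rw [Finset.sum_congr rfl (fun j _ => hpt j), Finset.sum_add_distrib,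
      Finset.sum_ite_eq' Finset.univ i ζ] at h4
    simp at h4
    have h5 : (∑ j : Fin M, if (i:ℕ)+1 ≤ (j:ℕ) then ζ j else 0) = ∑ x, if i < x then ζ x else 0 :=
      Finset.sum_congr rfl (fun j _ => by simp only [Fin.lt_def, Nat.add_one_le_iff])
    linarith
  have hfeas : ∑ i, ζ i * ν i = (M:ℝ) - r := by
    have h1 : ∀ i : Fin M, ζ i * ν i
        = (fun k : ℕ => max ((∑ j : Fin M, if k ≤ (j:ℕ) then ζ j else 0) - r) 0) (i:ℕ)
          - (fun k : ℕ => max ((∑ j : Fin M, if k ≤ (j:ℕ) then ζ j else 0) - r) 0) ((i:ℕ)+1) := by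
      intro i
      show ζ i * ν i = max ((∑ j : Fin M, if (i:ℕ) ≤ (j:ℕ) then ζ j else 0) - r) 0
        - max ((∑ j : Fin M, if (i:ℕ)+1 ≤ (j:ℕ) then ζ j else 0) - r) 0
      rw [hkey i, ← hTval i, ← hT'val i]
    rw [Finset.sum_congr rfl (fun i _ => h1 i)]
    rw [Fin.sum_univ_eq_sum_range
      (fun k => (fun k : ℕ => max ((∑ j : Fin M, if k ≤ (j:ℕ) then ζ j else 0) - r) 0) k
        - (fun k : ℕ => max ((∑ j : Fin M, if k ≤ (j:ℕ) then ζ j else 0) - r) 0) (k+1)) M]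
    rw [Finset.sum_range_sub'
      (fun k : ℕ => max ((∑ j : Fin M, if k ≤ (j:ℕ) then ζ j else 0) - r) 0) M]
    show max ((∑ j : Fin M, if 0 ≤ (j:ℕ) then ζ j else 0) - r) 0
      - max ((∑ j : Fin M, if M ≤ (j:ℕ) then ζ j else 0) - r) 0 = (M:ℝ) - r
    have hg0 : (∑ j : Fin M, if 0 ≤ (j:ℕ) then ζ j else 0) = (M:ℝ) := by
      simp only [Nat.zero_le, if_true]
      exact hζsum
    have hgM : (∑ j : Fin M, if M ≤ (j:ℕ) then ζ j else 0) = 0 := by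
      apply Finset.sum_eq_zero
      intro j _
      have := j.isLt
      simp [Nat.not_le.mpr this]
    rw [hg0, hgM]
    rw [max_eq_left (by linarith), max_eq_right (by linarith)]
    ring
  refine ⟨hν01, le_of_eq hfeas.symm, ?_⟩
  -- optimality
  intro μ hμ hμfeas
  by_cases hall : ∀ i, ν i = 1
  · -- then r = 0 and every feasible μ must be all ones
    have hνsum : ∑ i, ζ i * ν i = (M:ℝ) := by
      rw [Finset.sum_congr rfl (fun i _ => by rw [hall i, mul_one]), hζsum]
    have hrz : r = 0 := by rw [hfeas] at hνsum; linarith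
    have hle : ∑ i, ζ i * μ i ≤ ∑ i, ζ i := by
      apply Finset.sum_le_sum
      intro i _
      have := (hμ i).2
      nlinarith [hζpos i]
    have hzero : ∑ i, (ζ i - ζ i * μ i) = 0 := by
      rw [Finset.sum_sub_distrib, hζsum]
      rw [hrz] at hμfeas
      rw [hζsum] at hle
      linarith
    have hμ1 : ∀ i, μ i = 1 := by
      intro i
      have hterm := (Finset.sum_eq_zero_iff_of_nonneg
        (fun j _ => by nlinarith [hζpos j, (hμ j).2] : ∀ j ∈ Finset.univ, 0 ≤ ζ j - ζ j * μ j)).mp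
        hzero i (Finset.mem_univ i)
      have := hζpos i
      nlinarith
    apply le_of_eq
    apply Finset.sum_congr rfl
    intro i _
    rw [hall i, hμ1 i]
  · push_neg at hall
    obtain ⟨i0, hi0⟩ := hall
    set S := Finset.univ.filter (fun i => ν i ≠ 1) with hS
    have hSne : S.Nonempty := ⟨i0, by simp [hS, hi0]⟩
    set k := S.min' hSne with hkdef
    have hkS : ν k ≠ 1 := by
      have h := S.min'_mem hSne
      simp only [hS, Finset.mem_filter, Finset.mem_univ, true_and] at h
      exact h
    have hlt1 : ∀ i, i < k → ν i = 1 := by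
      intro i hik
      by_contra h
      exact absurd (S.min'_le i (by simp [hS, h])) (not_le.mpr hik)
    have hνk1 : ν k < 1 := lt_of_le_of_ne (hν01 k).2 hkS
    -- derive the threshold inequality
    have hmax : max ((∑ j ∈ Finset.Ici k, ζ j) - r) 0 < ζ k := by
      have hz := hζpos k
      by_contra h
      push_neg at h
      have h1 : (1:ℝ) ≤ (1 / ζ k) * max ((∑ j ∈ Finset.Ici k, ζ j) - r) 0 := by
        rw [one_div, inv_mul_eq_div, le_div_iff₀ hz, one_mul]
        exact h
      rw [hν k, min_eq_right h1] at hνk1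
      exact lt_irrefl 1 hνk1
    have hTk : (∑ j ∈ Finset.Ici k, ζ j) - ζ k < r := by
      have := le_max_left ((∑ j ∈ Finset.Ici k, ζ j) - r) (0:ℝ)
      linarith
    -- ν i = 0 for i > k
    have hgt0 : ∀ i, k < i → ν i = 0 := by
      intro i hki
      have hTi : (∑ j ∈ Finset.Ici i, ζ j) ≤ (∑ j ∈ Finset.Ici k, ζ j) - ζ k := by
        have hsub : insert k (Finset.Ici i) ⊆ Finset.Ici k := by
          intro j hj
          rcases Finset.mem_insert.mp hj with h | h
          · subst h; exact Finset.mem_Ici.mpr le_rfl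
          · exact Finset.mem_Ici.mpr (le_trans hki.le (Finset.mem_Ici.mp h))
        have hkni : k ∉ Finset.Ici i := by
          rw [Finset.mem_Ici]
          exact not_le.mpr hki
        have hle := Finset.sum_le_sum_of_subset_of_nonneg hsub
          (fun j _ _ => (hζpos j).le)
        rw [Finset.sum_insert hkni] at hle
        linarith
      rw [hν i]
      have h0 : max ((∑ j ∈ Finset.Ici i, ζ j) - r) 0 = 0 :=
        max_eq_right (by linarith)
      rw [h0, mul_zero]
      exact min_eq_left zero_le_one
    -- pointwise inequality
    have hpt : ∀ i : Fin M, a k * (ζ i * (μ i - ν i)) ≤ ζ k * (a i * (μ i - ν i)) := by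
      intro i
      rcases lt_trichotomy i k with h | h | h
      · have h1 : ν i = 1 := hlt1 i h
        have h2 : μ i - ν i ≤ 0 := by have := (hμ i).2; rw [h1]; linarith
        have h3 : a i * ζ k ≤ a k * ζ i :=
          mul_le_mul (hamono i k h.le) (hζanti h.le) (hζpos k).le (hapos k).le
        nlinarith
      · subst h; apply le_of_eq; ring
      · have h1 : ν i = 0 := hgt0 i h
        have h2 : 0 ≤ μ i - ν i := by have := (hμ i).1; rw [h1]; linarith
        have h3 : a k * ζ i ≤ a i * ζ k :=
          mul_le_mul (hamono k i h.le) (hζanti h.le) (hζpos i).le (hapos i).le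
        nlinarith
    have hsum := Finset.sum_le_sum (fun i (_ : i ∈ Finset.univ) => hpt i)
    rw [← Finset.mul_sum, ← Finset.mul_sum] at hsum
    have e1 : ∑ i, ζ i * (μ i - ν i) = (∑ i, ζ i * μ i) - (∑ i, ζ i * ν i) := by
      rw [← Finset.sum_sub_distrib]
      exact Finset.sum_congr rfl (fun i _ => by ring)
    have e2 : ∑ i, a i * (μ i - ν i) = (∑ i, a i * μ i) - (∑ i, a i * ν i) := by
      rw [← Finset.sum_sub_distrib]
      exact Finset.sum_congr rfl (fun i _ => by ring)
    rw [e1, e2, hfeas] at hsum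
    have hA : 0 ≤ (∑ i, ζ i * μ i) - ((M:ℝ) - r) := by linarith
    have hL : 0 ≤ a k * ((∑ i, ζ i * μ i) - ((M:ℝ) - r)) :=
      mul_nonneg (hapos k).le hA
    have hR : 0 ≤ ζ k * ((∑ i, a i * μ i) - (∑ i, a i * ν i)) := le_trans hL hsum
    nlinarith [hζpos k]
end

section
/- Let M, N be positive integers with N ≥ M, set a_i = 2i − 1 + N − M for i = 1,…,M, let ζ_1 ≥ ζ_2 ≥ ⋯ ≥ ζ_M > 0 with ∑_{i=1}^M ζ_i = M, and define r_0 = 0 and r_k = ∑_{i=M−k+1}^{M} ζ_i for k = 1,…,M. Then for every k ∈ {0,1,…,M−1} and every r ∈ [r_k, r_{k+1}], the minimum of ∑_{i=1}^M a_i ν_i over ν ∈ [0,1]^M subject to ∑_{i=1}^M ζ_i ν_i ≥ M − r equals ∑_{i=1}^{M−k−1} (2i−1+N−M) + ((2(M−k)−1+N−M)/ζ_{M−k}) · (∑_{j=M−k}^{M} ζ_j − r). -/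
theorem dmt_piecewise_linear_segment (M N : ℕ) (hM : 0 < M) (hNM : M ≤ N)
    (a : Fin M → ℝ) (ha : ∀ i, a i = 2*((i : ℕ) : ℝ) + 1 + (N : ℝ) - (M : ℝ))
    (ζ : Fin M → ℝ) (hζpos : ∀ i, 0 < ζ i) (hζanti : Antitone ζ)
    (hζsum : ∑ i, ζ i = (M : ℝ))
    (k : ℕ) (hk : k < M) (r : ℝ)
    (hr1 : ∑ i ∈ Finset.univ.filter (fun i : Fin M => M - k ≤ (i : ℕ)), ζ i ≤ r)
    (hr2 : r ≤ ∑ i ∈ Finset.univ.filter (fun i : Fin M => M - (k+1) ≤ (i : ℕ)), ζ i) :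
    IsLeast {x : ℝ | ∃ ν : Fin M → ℝ, (∀ i, ν i ∈ Set.Icc (0 : ℝ) 1) ∧
        ((M : ℝ) - r ≤ ∑ i, ζ i * ν i) ∧ x = ∑ i, a i * ν i}
      ((∑ i ∈ Finset.univ.filter (fun i : Fin M => (i : ℕ) < M - k - 1), a i) +
        (2*((M : ℝ) - (k : ℝ)) - 1 + (N : ℝ) - (M : ℝ)) / ζ ⟨M - k - 1, by omega⟩ *
        ((∑ i ∈ Finset.univ.filter (fun i : Fin M => M - k - 1 ≤ (i : ℕ)), ζ i) - r)) := by
  have hpval : M - k - 1 < M := by omega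
  set p : Fin M := ⟨M - k - 1, hpval⟩ with hpdef
  have hcast : ((M - k - 1 : ℕ) : ℝ) = (M : ℝ) - (k : ℝ) - 1 := by
    have h : k + 1 ≤ M := hk
    rw [Nat.sub_sub, Nat.cast_sub h, Nat.cast_add, Nat.cast_one]; ring
  have hap : a p = 2*((M : ℝ) - (k : ℝ)) - 1 + (N : ℝ) - (M : ℝ) := by
    rw [ha p]
    show 2*((M - k - 1 : ℕ) : ℝ) + 1 + (N : ℝ) - (M : ℝ) = _
    rw [hcast]; ring
  have hζp : 0 < ζ p := hζpos p
  have hapos : 0 < a p := by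
    rw [hap]
    have h1 : (k : ℝ) + 1 ≤ (M : ℝ) := by exact_mod_cast hk
    have h2 : (M : ℝ) ≤ (N : ℝ) := by exact_mod_cast hNM
    linarith
  set c : ℝ := a p / ζ p with hcdef
  have hc : 0 < c := div_pos hapos hζp
  -- rewrite the target constant
  rw [← hap]
  set A : Finset (Fin M) := Finset.univ.filter (fun i : Fin M => (i : ℕ) < M - k - 1) with hA
  set B : Finset (Fin M) := Finset.univ.filter (fun i : Fin M => M - k - 1 ≤ (i : ℕ)) with hB
  set S : ℝ := ∑ i ∈ B, ζ i with hS
  have hBnot : B = Finset.univ.filter (fun i : Fin M => ¬ ((i : ℕ) < M - k - 1)) := by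
    rw [hB]; apply Finset.filter_congr; intro i _
    constructor <;> (intro h; omega)
  have hAB : (∑ i ∈ A, ζ i) + S = (M : ℝ) := by
    rw [hS, hBnot, hA, Finset.sum_filter_add_sum_filter_not, hζsum]
  -- hr2 rewritten
  have hr2' : r ≤ S := by
    have : Finset.univ.filter (fun i : Fin M => M - (k+1) ≤ (i : ℕ)) = B := by
      rw [hB]; apply Finset.filter_congr; intro i _
      constructor <;> (intro h; omega)
    rw [this] at hr2; exact hr2
  -- S = ζ p + sum over i > p
  have hSsplit : S = ζ p + ∑ i ∈ Finset.univ.filter (fun i : Fin M => M - k ≤ (i : ℕ)), ζ i := by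
    have hins : B = insert p (Finset.univ.filter (fun i : Fin M => M - k ≤ (i : ℕ))) := by
      ext i
      simp only [hB, Finset.mem_filter, Finset.mem_univ, true_and, Finset.mem_insert,
        Fin.ext_iff, hpdef]
      omega
    have hnotmem : p ∉ Finset.univ.filter (fun i : Fin M => M - k ≤ (i : ℕ)) := by
      simp only [Finset.mem_filter, Finset.mem_univ, true_and, hpdef]
      omega
    rw [hS, hins, Finset.sum_insert hnotmem]
  set t : ℝ := (S - r) / ζ p with htdef
  have ht0 : 0 ≤ t := div_nonneg (by linarith) hζp.le
  have ht1 : t ≤ 1 := by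
    rw [htdef, div_le_one hζp]
    linarith
  -- sign facts
  have hkey1 : ∀ i : Fin M, M - k - 1 ≤ (i : ℕ) → 0 ≤ a i - c * ζ i := by
    intro i hi
    have hai : a p ≤ a i := by
      rw [ha i, ha p]
      have : ((p : ℕ) : ℝ) ≤ ((i : ℕ) : ℝ) := by exact_mod_cast hi
      linarith
    have hζi : ζ i ≤ ζ p := hζanti (by exact hi)
    rw [hcdef, div_mul_eq_mul_div, sub_nonneg, div_le_iff₀ hζp]
    nlinarith [hζpos i, hapos]
  have hkey2 : ∀ i : Fin M, (i : ℕ) < M - k - 1 → a i - c * ζ i ≤ 0 := by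
    intro i hi
    have hai : a i ≤ a p := by
      rw [ha i, ha p]
      have : ((i : ℕ) : ℝ) ≤ ((p : ℕ) : ℝ) := by exact_mod_cast (Nat.le_of_lt hi)
      linarith
    have hζi : ζ p ≤ ζ i := hζanti (by exact Nat.le_of_lt hi)
    rw [hcdef, div_mul_eq_mul_div, sub_nonpos, le_div_iff₀ hζp]
    nlinarith [hζpos i, hapos]
  constructor
  · -- membership
    refine ⟨fun i => if (i : ℕ) < M - k - 1 then 1 else if i = p then t else 0, ?_, ?_, ?_⟩
    · intro i
      dsimp only
      split_ifs
      · exact ⟨zero_le_one, le_refl 1⟩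
      · exact ⟨ht0, ht1⟩
      · exact ⟨le_refl 0, zero_le_one⟩
    · have hsum : ∀ f : Fin M → ℝ,
          (∑ i, f i * (if (i : ℕ) < M - k - 1 then (1:ℝ) else if i = p then t else 0))
            = ∑ i ∈ A, f i + f p * t := by
        intro f
        rw [← Finset.sum_filter_add_sum_filter_not Finset.univ
          (fun i : Fin M => (i : ℕ) < M - k - 1) (fun i => f i * _)]
        congr 1
        · apply Finset.sum_congr rfl
          intro i hi
          simp only [Finset.mem_filter, Finset.mem_univ, true_and] at hi
          simp [hi]
        · rw [Finset.sum_eq_single p]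
          · simp [hpdef]
          · intro i hi hne
            simp only [Finset.mem_filter, Finset.mem_univ, true_and] at hi
            simp [hi, hne]
          · intro h
            exact absurd (show p ∈ Finset.univ.filter
              (fun i : Fin M => ¬ ((i : ℕ) < M - k - 1)) from by
                simp only [Finset.mem_filter, Finset.mem_univ, true_and, hpdef]; omega) h
      rw [hsum ζ]
      have : ζ p * t = S - r := by
        rw [htdef, mul_div_cancel₀ _ (ne_of_gt hζp)]
      linarith [hAB]
    · rw [show (∑ i, a i * (if (i : ℕ) < M - k - 1 then (1:ℝ) else if i = p then t else 0))
          = ∑ i ∈ A, a i + a p * t from ?_]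
      · ring
      · rw [← Finset.sum_filter_add_sum_filter_not Finset.univ
          (fun i : Fin M => (i : ℕ) < M - k - 1) (fun i => a i * _)]
        congr 1
        · apply Finset.sum_congr rfl
          intro i hi
          simp only [Finset.mem_filter, Finset.mem_univ, true_and] at hi
          simp [hi]
        · rw [Finset.sum_eq_single p]
          · simp [hpdef]
          · intro i hi hne
            simp only [Finset.mem_filter, Finset.mem_univ, true_and] at hi
            simp [hi, hne]
          · intro h
            exact absurd (show p ∈ Finset.univ.filter
              (fun i : Fin M => ¬ ((i : ℕ) < M - k - 1)) from by
                simp only [Finset.mem_filter, Finset.mem_univ, true_and, hpdef]; omega) h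
  · -- lower bound
    rintro x ⟨ν, hν01, hνcon, rfl⟩
    have hdecomp : ∑ i, a i * ν i = ∑ i, (a i - c * ζ i) * ν i + c * ∑ i, ζ i * ν i := by
      rw [Finset.mul_sum, ← Finset.sum_add_distrib]
      apply Finset.sum_congr rfl
      intro i _
      ring
    have h1 : ∑ i ∈ A, (a i - c * ζ i) ≤ ∑ i, (a i - c * ζ i) * ν i := by
      calc ∑ i ∈ A, (a i - c * ζ i)
          ≤ ∑ i ∈ A, (a i - c * ζ i) * ν i := by
            apply Finset.sum_le_sum
            intro i hi
            simp only [hA, Finset.mem_filter, Finset.mem_univ, true_and] at hi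
            have := mul_le_mul_of_nonpos_left (hν01 i).2 (hkey2 i hi)
            linarith
        _ ≤ ∑ i, (a i - c * ζ i) * ν i := by
            apply Finset.sum_le_sum_of_subset_of_nonneg (Finset.subset_univ A)
            intro i _ hiA
            simp only [hA, Finset.mem_filter, Finset.mem_univ, true_and, not_lt] at hiA
            exact mul_nonneg (hkey1 i hiA) (hν01 i).1
    have h2 : c * ((M : ℝ) - r) ≤ c * ∑ i, ζ i * ν i :=
      mul_le_mul_of_nonneg_left hνcon hc.le
    have hAsub : ∑ i ∈ A, (a i - c * ζ i) = ∑ i ∈ A, a i - c * ∑ i ∈ A, ζ i := by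
      rw [Finset.sum_sub_distrib, Finset.mul_sum]
    have hAζ : ∑ i ∈ A, ζ i = (M : ℝ) - S := by linarith [hAB]
    calc ∑ i ∈ A, a i + c * (S - r)
        = ∑ i ∈ A, (a i - c * ζ i) + c * ((M : ℝ) - r) := by
          rw [hAsub, hAζ]; ring
      _ ≤ (∑ i, (a i - c * ζ i) * ν i) + c * ∑ i, ζ i * ν i := add_le_add h1 h2
      _ = ∑ i, a i * ν i := hdecomp.symm
end

section
/- Let M, N be positive integers with N ≥ M, set a_i = 2i − 1 + N − M for i = 1,…,M, and let ζ_1 ≥ ζ_2 ≥ ⋯ ≥ ζ_M > 0 with ∑_{i=1}^M ζ_i = M. For k = 0,1,…,M define r(k) = ∑_{i=M−k+1}^{M} ζ_i (so r(0) = 0 and r(M) = M). Then for every k ∈ {0,1,…,M}, the minimum of ∑_{i=1}^M a_i ν_i over ν ∈ [0,1]^M subject to ∑_{i=1}^M ζ_i ν_i ≥ M − r(k) equals (M − k)(N − k). -/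
theorem dmt_corner_points (M N : ℕ) (hM : 0 < M) (hNM : M ≤ N)
    (a : Fin M → ℝ) (ha : ∀ i, a i = 2*((i : ℕ) : ℝ) + 1 + (N : ℝ) - (M : ℝ))
    (ζ : Fin M → ℝ) (hζpos : ∀ i, 0 < ζ i) (hζanti : Antitone ζ)
    (hζsum : ∑ i, ζ i = (M : ℝ))
    (k : ℕ) (hk : k ≤ M)
    (rk : ℝ) (hrk : rk = ∑ i ∈ Finset.univ.filter (fun i : Fin M => M - k ≤ (i : ℕ)), ζ i) :
    IsLeast {x : ℝ | ∃ ν : Fin M → ℝ, (∀ i, ν i ∈ Set.Icc (0 : ℝ) 1) ∧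
        ((M : ℝ) - rk ≤ ∑ i, ζ i * ν i) ∧ x = ∑ i, a i * ν i}
      (((M : ℝ) - (k : ℝ)) * ((N : ℝ) - (k : ℝ))) := by
  set m := M - k with hmdef
  have hm : m ≤ M := Nat.sub_le M k
  have hmr : (m : ℝ) = (M : ℝ) - (k : ℝ) := by
    rw [hmdef, Nat.cast_sub hk]
  have hNMr : (M : ℝ) ≤ (N : ℝ) := by exact_mod_cast hNM
  set S := Finset.univ.filter (fun i : Fin M => (i : ℕ) < m) with hS
  -- sum of ζ over S
  have hζS : ∑ i ∈ S, ζ i = (M : ℝ) - rk := by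
    have h2 := Finset.sum_filter_add_sum_filter_not Finset.univ
      (fun i : Fin M => M - k ≤ (i : ℕ)) ζ
    have h1 : Finset.univ.filter (fun i : Fin M => ¬ (M - k ≤ (i : ℕ))) = S := by
      rw [hS]; ext i; simp [not_le]; omega
    rw [h1, hζsum, ← hrk] at h2
    linarith
  -- sum of a over S
  have haS : ∑ i ∈ S, a i = ((M : ℝ) - (k : ℝ)) * ((N : ℝ) - (k : ℝ)) := by
    have h1 : ∑ i ∈ S, a i = ∑ i ∈ Finset.range m,
        (2*(i : ℝ) + 1 + (N : ℝ) - (M : ℝ)) := by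
      rw [hS, Finset.sum_filter]
      simp only [ha]
      rw [Fin.sum_univ_eq_sum_range
        (fun n : ℕ => if n < m then 2*(n : ℝ) + 1 + (N : ℝ) - (M : ℝ) else 0)]
      rw [← Finset.sum_subset (Finset.range_subset_range.mpr hm)
        (fun x _ hx => by simp [Finset.mem_range.not.mp hx])]
      exact Finset.sum_congr rfl (fun x hx => by simp [Finset.mem_range.mp hx])
    have h2 : ∀ n : ℕ, ∑ i ∈ Finset.range n, (2*(i : ℝ) + 1 + (N : ℝ) - (M : ℝ))
        = (n : ℝ)*(n : ℝ) + (n : ℝ)*((N : ℝ) - (M : ℝ)) := by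
      intro n
      induction n with
      | zero => simp
      | succ p ih => rw [Finset.sum_range_succ, ih]; push_cast; ring
    rw [h1, h2 m, hmr]; ring
  -- positivity and monotonicity of a
  have hapos : ∀ i : Fin M, 0 ≤ a i := by
    intro i
    rw [ha]
    have : (0 : ℝ) ≤ ((i : ℕ) : ℝ) := Nat.cast_nonneg _
    linarith
  have hamono : ∀ i j : Fin M, (i : ℕ) ≤ (j : ℕ) → a i ≤ a j := by
    intro i j h
    rw [ha, ha]
    have : ((i : ℕ) : ℝ) ≤ ((j : ℕ) : ℝ) := by exact_mod_cast h
    linarith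
  constructor
  · -- membership
    refine ⟨fun i => if (i : ℕ) < m then 1 else 0, fun i => ?_, ?_, ?_⟩
    · by_cases h : (i : ℕ) < m <;> simp [h]
    · have : ∑ i, ζ i * (if (i : ℕ) < m then (1:ℝ) else 0) = ∑ i ∈ S, ζ i := by
        rw [hS, Finset.sum_filter]
        simp [mul_ite]
      rw [this, hζS]
    · have : ∑ i, a i * (if (i : ℕ) < m then (1:ℝ) else 0) = ∑ i ∈ S, a i := by
        rw [hS, Finset.sum_filter]
        simp [mul_ite]
      rw [this, haS]
  · -- lower bound
    rintro x ⟨ν, hν, hcon, rfl⟩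
    rcases Nat.eq_zero_or_pos m with hm0 | hm0
    · -- m = 0 : target is 0
      have : ((M : ℝ) - (k : ℝ)) * ((N : ℝ) - (k : ℝ)) = 0 := by
        have : (m : ℝ) = 0 := by rw [hm0]; norm_num
        rw [hmr] at this
        rw [show (M : ℝ) - (k : ℝ) = 0 from this]; ring
      rw [this]
      exact Finset.sum_nonneg fun i _ => mul_nonneg (hapos i) (hν i).1
    · set j : Fin M := ⟨m - 1, by omega⟩ with hj
      have hζj : 0 < ζ j := hζpos j
      set lam : ℝ := a j / ζ j with hlam
      have hlam0 : 0 ≤ lam := div_nonneg (hapos j) (le_of_lt hζj)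
      have key : ∀ i : Fin M,
          lam * (ζ i * ν i) - lam * (if (i : ℕ) < m then ζ i else 0)
            ≤ a i * ν i - (if (i : ℕ) < m then a i else 0) := by
        intro i
        by_cases h : (i : ℕ) < m
        · simp only [h, if_pos]
          have hij : (i : ℕ) ≤ (j : ℕ) := by simp [hj]; omega
          have hζij : ζ j ≤ ζ i := hζanti (Fin.le_def.mpr hij)
          have hij2 : a i * ζ j ≤ a j * ζ i :=
            mul_le_mul (hamono i j hij) hζij (le_of_lt hζj) (hapos j)
          have hAi : a i ≤ lam * ζ i := by
            rw [hlam, div_mul_eq_mul_div, le_div_iff₀ hζj]; exact hij2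
          nlinarith [mul_nonneg (sub_nonneg.mpr hAi) (sub_nonneg.mpr (hν i).2)]
        · simp only [h, if_neg, not_false_iff]
          have hji : (j : ℕ) ≤ (i : ℕ) := by simp [hj]; omega
          have hζij : ζ i ≤ ζ j := hζanti (Fin.le_def.mpr hji)
          have hij2 : a j * ζ i ≤ a i * ζ j :=
            mul_le_mul (hamono j i hji) hζij (le_of_lt (hζpos i)) (hapos i)
          have hAi : lam * ζ i ≤ a i := by
            rw [hlam, div_mul_eq_mul_div, div_le_iff₀ hζj]; exact hij2
          nlinarith [mul_nonneg (sub_nonneg.mpr hAi) (hν i).1]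
      have hsum := Finset.sum_le_sum (fun i (_ : i ∈ Finset.univ) => key i)
      simp only [Finset.sum_sub_distrib, ← Finset.mul_sum, ← Finset.sum_filter] at hsum
      rw [← hS] at hsum
      have h0 : 0 ≤ lam * (∑ i, ζ i * ν i) - lam * (∑ i ∈ S, ζ i) := by
        rw [hζS]
        have := mul_le_mul_of_nonneg_left hcon hlam0
        linarith
      rw [haS] at hsum
      linarith
end

section
/- Let M, N be positive integers with N ≥ M, set a_i = 2i − 1 + N − M for i = 1,…,M, and let ζ_1,…,ζ_M ≥ 0 satisfy ∑_{i=1}^M ζ_i = M with ζ_i = 0 for at least one index i. Then the minimum of ∑_{i=1}^M a_i ν_i over ν ∈ [0,1]^M subject to ∑_{i=1}^M ζ_i ν_i ≥ M equals MN − ∑_{i : ζ_i = 0} (2i − 1 + N − M). -/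
lemma sum_range_real_id (n : ℕ) : ∑ i ∈ Finset.range n, (i : ℝ) = n * (n - 1) / 2 := by
  induction n with
  | zero => simp
  | succ k ih => rw [Finset.sum_range_succ, ih]; push_cast; ring

theorem dmt_vanishing_coefficients (M N : ℕ) (hM : 0 < M) (hNM : M ≤ N)
    (a : Fin M → ℝ) (ha : ∀ i, a i = 2*((i : ℕ) : ℝ) + 1 + (N : ℝ) - (M : ℝ))
    (ζ : Fin M → ℝ) (hζ0 : ∀ i, 0 ≤ ζ i) (hζsum : ∑ i, ζ i = (M : ℝ))
    (hzero : ∃ i, ζ i = 0) :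
    IsLeast {x : ℝ | ∃ ν : Fin M → ℝ, (∀ i, ν i ∈ Set.Icc (0 : ℝ) 1) ∧
        ((M : ℝ) ≤ ∑ i, ζ i * ν i) ∧ x = ∑ i, a i * ν i}
      ((M : ℝ) * (N : ℝ) - ∑ i ∈ Finset.univ.filter (fun i : Fin M => ζ i = 0), a i) := by
  have ha_pos : ∀ i, 0 < a i := by
    intro i
    rw [ha]
    have h1 : (M : ℝ) ≤ (N : ℝ) := by exact_mod_cast hNM
    have h2 : (0 : ℝ) ≤ ((i : ℕ) : ℝ) := Nat.cast_nonneg _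
    linarith
  have hsum_a : ∑ i, a i = (M : ℝ) * (N : ℝ) := by
    simp_rw [ha]
    rw [Fin.sum_univ_eq_sum_range (fun i => 2*((i : ℕ) : ℝ) + 1 + (N : ℝ) - (M : ℝ))]
    have expand : ∑ i ∈ Finset.range M, (2*(i : ℝ) + 1 + (N : ℝ) - (M : ℝ))
        = 2 * (∑ i ∈ Finset.range M, (i : ℝ)) + (M : ℝ) * (1 + (N : ℝ) - (M : ℝ)) := by
      rw [Finset.sum_congr rfl (fun i _ => by ring : ∀ i ∈ Finset.range M,
        (2*(i : ℝ) + 1 + (N : ℝ) - (M : ℝ)) = 2 * (i : ℝ) + (1 + (N : ℝ) - (M : ℝ)))]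
      rw [Finset.sum_add_distrib, Finset.sum_const, Finset.card_range, nsmul_eq_mul,
        Finset.mul_sum]
    rw [expand, sum_range_real_id]
    have hM1 : (1 : ℝ) ≤ (M : ℝ) := by exact_mod_cast hM
    ring
  have split := Finset.sum_filter_add_sum_filter_not Finset.univ (fun i : Fin M => ζ i = 0) a
  constructor
  · refine ⟨fun i => if ζ i = 0 then 0 else 1, ?_, ?_, ?_⟩
    · intro i; by_cases h : ζ i = 0 <;> simp [h]
    · have h : ∑ i, ζ i * (if ζ i = 0 then (0:ℝ) else 1) = ∑ i, ζ i := by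
        refine Finset.sum_congr rfl fun i _ => ?_
        by_cases h : ζ i = 0 <;> simp [h]
      rw [h, hζsum]
    · have h : ∀ i, a i * (if ζ i = 0 then (0:ℝ) else 1)
          = a i - (if ζ i = 0 then a i else 0) := by
        intro i; by_cases h : ζ i = 0 <;> simp [h]
      simp_rw [h]
      rw [Finset.sum_sub_distrib, ← Finset.sum_filter, hsum_a]
  · rintro x ⟨ν, hν, hcon, rfl⟩
    have hzero_terms : ∀ i ∈ Finset.univ, (0:ℝ) ≤ ζ i * (1 - ν i) := by
      intro i _
      exact mul_nonneg (hζ0 i) (by linarith [(hν i).2])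
    have hsum_le : ∑ i, ζ i * (1 - ν i) ≤ 0 := by
      have : ∑ i, ζ i * (1 - ν i) = ∑ i, ζ i - ∑ i, ζ i * ν i := by
        rw [← Finset.sum_sub_distrib]; exact Finset.sum_congr rfl fun i _ => by ring
      rw [this, hζsum]; linarith
    have hall : ∀ i ∈ Finset.univ, ζ i * (1 - ν i) = 0 := by
      rw [← Finset.sum_eq_zero_iff_of_nonneg hzero_terms]
      exact le_antisymm hsum_le (Finset.sum_nonneg hzero_terms)
    have key : ∀ i, ζ i ≠ 0 → ν i = 1 := by
      intro i hi
      have := hall i (Finset.mem_univ i)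
      rcases mul_eq_zero.mp this with h | h
      · exact absurd h hi
      · linarith
    have hsplit := Finset.sum_filter_add_sum_filter_not Finset.univ
      (fun i : Fin M => ζ i = 0) (fun i => a i * ν i)
    have h1 : ∑ i ∈ Finset.univ.filter (fun i : Fin M => ¬ ζ i = 0), a i * ν i
        = ∑ i ∈ Finset.univ.filter (fun i : Fin M => ¬ ζ i = 0), a i := by
      refine Finset.sum_congr rfl fun i hi => ?_
      rw [key i (Finset.mem_filter.mp hi).2, mul_one]
    have h2 : (0:ℝ) ≤ ∑ i ∈ Finset.univ.filter (fun i : Fin M => ζ i = 0), a i * ν i :=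
      Finset.sum_nonneg fun i _ => mul_nonneg (ha_pos i).le (hν i).1
    have : (M : ℝ) * (N : ℝ) - ∑ i ∈ Finset.univ.filter (fun i : Fin M => ζ i = 0), a i
        = ∑ i ∈ Finset.univ.filter (fun i : Fin M => ¬ ζ i = 0), a i := by
      rw [← hsum_a, ← split]; ring
    rw [this, ← hsplit, ← h1]
    linarith
end
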